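/- Let D = A∂_X + B∂_Y with A, B ∈ ℤ[X,Y], deg A, deg B ≤ d, ‖A‖_∞, ‖B‖_∞ ≤ H, and l = (N+1)(N+2)/2. Then the height of the N-th ecstatic polynomial satisfies ‖E_N(D)‖_∞ ≤ (2·l·H·(l(d−1)+N)³)^{l(l−1)/2}. -/

import Mathlib

/-!
The height is dominated by the ℓ¹-norm `‖·‖₁` (sum of the absolute values of the coefficients),
which is submultiplicative. Since `‖∂_X h‖₁ + ‖∂_Y h‖₁ ≤ deg h · ‖h‖₁` and
`deg (D h) ≤ deg h + d - 1`, every entry of the `j`-th row of the ecstatic matrix has degree at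
most `M = l(d-1) + N` and ℓ¹-norm at most `(C M)^j`, where `C = (d+1)(d+2)/2 · H` bounds
`‖A‖₁` and `‖B‖₁` (there are `(d+1)(d+2)/2` monomials of degree `≤ d`). Expanding the
determinant over the `l!` permutations gives `‖E_N(D)‖₁ ≤ l! (C M)^(l(l-1)/2)`, and
`l! ≤ l^(l(l-1)/2)`, `(d+1)(d+2)/2 ≤ 2 M²` (except for `d = N = 1`, checked directly) turn this
into the stated bound.
-/

open MvPolynomial

/-- Index set for the monomial basis of polynomials of total degree at most `N` in two
variables: pairs of exponents `(i, j)` with `i + j ≤ N`.  It has `(N+1)(N+2)/2` elements. -/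
abbrev EcsIdx (N : ℕ) := {m : Fin (N + 1) × Fin (N + 1) // (m.1 : ℕ) + (m.2 : ℕ) ≤ N}

/-- The monomial basis `X^i Y^j`, `i + j ≤ N`, of `R[X,Y]_{≤N}`. -/
noncomputable def monFam {R : Type*} [CommRing R] (N : ℕ) :
    EcsIdx N → MvPolynomial (Fin 2) R :=
  fun m => X 0 ^ (m.val.1 : ℕ) * X 1 ^ (m.val.2 : ℕ)

/-- The ecstatic matrix of the derivation `D = A ∂_X + B ∂_Y` with respect to a family
`w` indexed by `EcsIdx N`: its rows are `D^{j}(w i)` for `j = 0, …, l-1` (rows enumerated via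
the equivalence `EcsIdx N ≃ Fin l`). -/
noncomputable def ecsMatOf {R : Type*} [CommRing R] (A B : MvPolynomial (Fin 2) R) (N : ℕ)
    (w : EcsIdx N → MvPolynomial (Fin 2) R) :
    Matrix (EcsIdx N) (EcsIdx N) (MvPolynomial (Fin 2) R) :=
  fun j i =>
    ((fun h => A * pderiv 0 h + B * pderiv 1 h)^[((Fintype.equivFin (EcsIdx N)) j : ℕ)]) (w i)

/-- The `N`-th ecstatic polynomial `E_N(D)` of `D = A ∂_X + B ∂_Y`: the determinant of the
ecstatic matrix built on the monomial basis of `R[X,Y]_{≤N}`. -/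
noncomputable def ecstatic {R : Type*} [CommRing R] (A B : MvPolynomial (Fin 2) R) (N : ℕ) :
    MvPolynomial (Fin 2) R :=
  (ecsMatOf A B N (monFam N)).det

open Finset
open scoped Pointwise

namespace MvPolynomial

variable {σ : Type*}

section CommSemiring

variable {R : Type*} [CommSemiring R]

theorem pderiv_eq_sum_monomial (i : σ) (p : MvPolynomial σ R) :
    pderiv i p = ∑ m ∈ p.support, monomial (m - Finsupp.single i 1) (p.coeff m * m i) := by
  conv_lhs => rw [p.as_sum, map_sum]
  exact sum_congr rfl fun _ _ => pderiv_monomial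

theorem totalDegree_pderiv_le (i : σ) (p : MvPolynomial σ R) :
    (pderiv i p).totalDegree ≤ p.totalDegree - 1 := by
  refine Finset.sup_le fun m hm => ?_
  have hmem : m + Finsupp.single i 1 ∈ p.support := by
    rw [mem_support_iff, coeff_pderiv] at hm
    exact mem_support_iff.mpr (left_ne_zero_of_mul hm)
  have := le_totalDegree hmem
  change Finsupp.degree (m + Finsupp.single i 1) ≤ _ at this
  rw [map_add, Finsupp.degree_single] at this
  change Finsupp.degree m ≤ _
  omega

theorem pderiv_eq_zero_of_totalDegree_eq_zero (i : σ) {p : MvPolynomial σ R}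
    (hp : p.totalDegree = 0) : pderiv i p = 0 := by
  rw [totalDegree_eq_zero_iff_eq_C.mp hp, pderiv_C]

theorem totalDegree_mul_pderiv_le (i : σ) (a p : MvPolynomial σ R) :
    (a * pderiv i p).totalDegree ≤ p.totalDegree + (a.totalDegree - 1) := by
  by_cases hp : p.totalDegree = 0
  · simp [pderiv_eq_zero_of_totalDegree_eq_zero i hp]
  · have := totalDegree_pderiv_le i p
    have := totalDegree_mul a (pderiv i p)
    omega

theorem totalDegree_sum_mul_pderiv_le [Fintype σ] {a : σ → MvPolynomial σ R} {d : ℕ}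
    (ha : ∀ i, (a i).totalDegree ≤ d) (p : MvPolynomial σ R) :
    (∑ i, a i * pderiv i p).totalDegree ≤ p.totalDegree + (d - 1) :=
  totalDegree_finsetSum_le fun i _ =>
    (totalDegree_mul_pderiv_le i (a i) p).trans (by have := ha i; omega)

theorem totalDegree_iterate_le {f : MvPolynomial σ R → MvPolynomial σ R} {e : ℕ}
    (hf : ∀ p, (f p).totalDegree ≤ p.totalDegree + e) (p : MvPolynomial σ R) (j : ℕ) :
    (f^[j] p).totalDegree ≤ p.totalDegree + j * e := by
  induction j with
  | zero => simp
  | succ j ih =>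
    rw [Function.iterate_succ_apply']
    exact (hf _).trans (by rw [add_one_mul]; omega)

end CommSemiring

def l1norm (p : MvPolynomial σ ℤ) : ℤ := ∑ m ∈ p.support, |p.coeff m|

theorem l1norm_eq_sum_of_support_subset {p : MvPolynomial σ ℤ} {s : Finset (σ →₀ ℕ)}
    (h : p.support ⊆ s) : l1norm p = ∑ m ∈ s, |p.coeff m| :=
  sum_subset h fun m _ hm => by simp [notMem_support_iff.mp hm]

theorem l1norm_nonneg (p : MvPolynomial σ ℤ) : 0 ≤ l1norm p :=
  sum_nonneg fun _ _ => abs_nonneg _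

theorem abs_coeff_le_l1norm (p : MvPolynomial σ ℤ) (m : σ →₀ ℕ) : |p.coeff m| ≤ l1norm p := by
  by_cases h : m ∈ p.support
  · exact single_le_sum (f := fun m => |p.coeff m|) (fun _ _ => abs_nonneg _) h
  · simpa [notMem_support_iff.mp h] using l1norm_nonneg p

theorem l1norm_le_card_support_mul {p : MvPolynomial σ ℤ} {H : ℤ} (hp : ∀ m, |p.coeff m| ≤ H) :
    l1norm p ≤ #p.support * H := by
  calc l1norm p ≤ ∑ _m ∈ p.support, H := sum_le_sum fun m _ => hp m
    _ = #p.support * H := by rw [sum_const, nsmul_eq_mul]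

@[simp]
theorem l1norm_neg (p : MvPolynomial σ ℤ) : l1norm (-p) = l1norm p := by
  simp [l1norm]

@[simp]
theorem l1norm_monomial (m : σ →₀ ℕ) (c : ℤ) : l1norm (monomial m c) = |c| := by
  classical
  rw [l1norm_eq_sum_of_support_subset support_monomial_subset, sum_singleton, coeff_monomial,
    if_pos rfl]

theorem l1norm_add_le (p q : MvPolynomial σ ℤ) : l1norm (p + q) ≤ l1norm p + l1norm q := by
  classical
  rw [l1norm_eq_sum_of_support_subset support_add,
    l1norm_eq_sum_of_support_subset subset_union_left,
    l1norm_eq_sum_of_support_subset subset_union_right, ← sum_add_distrib]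
  exact sum_le_sum fun m _ => by simpa using abs_add_le (p.coeff m) (q.coeff m)

theorem l1norm_mul_le (p q : MvPolynomial σ ℤ) : l1norm (p * q) ≤ l1norm p * l1norm q := by
  classical
  rw [l1norm_eq_sum_of_support_subset (support_mul p q)]
  set pairs := p.support ×ˢ q.support
  have coeff_mul_le (m : σ →₀ ℕ) : |(p * q).coeff m|
      ≤ ∑ x ∈ pairs with x.1 + x.2 = m, |p.coeff x.1| * |q.coeff x.2| := by
    have hsum : ∑ x ∈ antidiagonal m, p.coeff x.1 * q.coeff x.2
        = ∑ x ∈ pairs with x.1 + x.2 = m, p.coeff x.1 * q.coeff x.2 := by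
      refine (sum_subset (fun x hx => ?_) fun x hx hx' => ?_).symm
      · simpa using (mem_filter.mp hx).2
      · rw [HasAntidiagonal.mem_antidiagonal] at hx
        simp only [pairs, mem_filter, mem_product, mem_support_iff, hx, and_true,
          not_and_or, not_not] at hx'
        rcases hx' with h | h <;> simp [h]
    rw [coeff_mul, hsum]
    exact (abs_sum_le_sum_abs _ _).trans_eq (sum_congr rfl fun x _ => abs_mul _ _)
  calc ∑ m ∈ p.support + q.support, |(p * q).coeff m|
      ≤ ∑ m ∈ p.support + q.support,
          ∑ x ∈ pairs with x.1 + x.2 = m, |p.coeff x.1| * |q.coeff x.2| :=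
        sum_le_sum fun m _ => coeff_mul_le m
    _ = ∑ x ∈ pairs, |p.coeff x.1| * |q.coeff x.2| :=
        sum_fiberwise_of_maps_to (fun x hx => add_mem_add (mem_product.mp hx).1
          (mem_product.mp hx).2) _
    _ = l1norm p * l1norm q := by rw [l1norm, l1norm, sum_mul_sum, sum_product]

theorem l1norm_sum_le {ι : Type*} (s : Finset ι) (f : ι → MvPolynomial σ ℤ) :
    l1norm (∑ i ∈ s, f i) ≤ ∑ i ∈ s, l1norm (f i) := by
  classical
  induction s using Finset.cons_induction with
  | empty => simp [l1norm]
  | cons a s ha ih =>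
    rw [sum_cons, sum_cons]
    exact (l1norm_add_le _ _).trans (add_le_add le_rfl ih)

theorem l1norm_prod_le {ι : Type*} (s : Finset ι) (f : ι → MvPolynomial σ ℤ) :
    l1norm (∏ i ∈ s, f i) ≤ ∏ i ∈ s, l1norm (f i) := by
  classical
  induction s using Finset.cons_induction with
  | empty => simpa using (l1norm_monomial (σ := σ) 0 1).le
  | cons a s ha ih =>
    rw [prod_cons, prod_cons]
    exact (l1norm_mul_le _ _).trans
      (mul_le_mul_of_nonneg_left ih (l1norm_nonneg _))

theorem l1norm_pderiv_le (i : σ) (p : MvPolynomial σ ℤ) :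
    l1norm (pderiv i p) ≤ ∑ m ∈ p.support, |p.coeff m| * m i := by
  rw [pderiv_eq_sum_monomial]
  refine (l1norm_sum_le _ _).trans (sum_le_sum fun m _ => ?_)
  simp [abs_mul]

theorem sum_l1norm_pderiv_le [Fintype σ] (p : MvPolynomial σ ℤ) :
    ∑ i, l1norm (pderiv i p) ≤ p.totalDegree * l1norm p := by
  calc ∑ i, l1norm (pderiv i p)
      ≤ ∑ i, ∑ m ∈ p.support, |p.coeff m| * m i := sum_le_sum fun i _ => l1norm_pderiv_le i p
    _ = ∑ m ∈ p.support, |p.coeff m| * (Finsupp.degree m : ℕ) := by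
      rw [sum_comm]
      refine sum_congr rfl fun m _ => ?_
      rw [← mul_sum, Finsupp.degree_eq_sum, Nat.cast_sum]
    _ ≤ ∑ m ∈ p.support, |p.coeff m| * p.totalDegree :=
      sum_le_sum fun m hm => mul_le_mul_of_nonneg_left
        (by exact_mod_cast le_totalDegree hm) (abs_nonneg _)
    _ = p.totalDegree * l1norm p := by rw [← sum_mul, mul_comm, l1norm]

theorem l1norm_sum_mul_pderiv_le [Fintype σ] {a : σ → MvPolynomial σ ℤ} {C : ℤ} (hC : 0 ≤ C)
    (ha : ∀ i, l1norm (a i) ≤ C) (p : MvPolynomial σ ℤ) :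
    l1norm (∑ i, a i * pderiv i p) ≤ C * p.totalDegree * l1norm p := by
  calc l1norm (∑ i, a i * pderiv i p)
      ≤ ∑ i, C * l1norm (pderiv i p) := (l1norm_sum_le _ _).trans <| sum_le_sum fun i _ =>
        (l1norm_mul_le _ _).trans (mul_le_mul_of_nonneg_right (ha i) (l1norm_nonneg _))
    _ ≤ C * p.totalDegree * l1norm p := by
      rw [← mul_sum, mul_assoc]
      exact mul_le_mul_of_nonneg_left (sum_l1norm_pderiv_le p) hC

theorem l1norm_iterate_le {f : MvPolynomial σ ℤ → MvPolynomial σ ℤ} {e : ℕ} {C : ℤ}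
    (hC : 0 ≤ C) (hdeg : ∀ p, (f p).totalDegree ≤ p.totalDegree + e)
    (hnorm : ∀ p, l1norm (f p) ≤ C * p.totalDegree * l1norm p) (p : MvPolynomial σ ℤ)
    {j M : ℕ} (hM : p.totalDegree + j * e ≤ M) :
    l1norm (f^[j] p) ≤ (C * M) ^ j * l1norm p := by
  induction j with
  | zero => simp
  | succ j ih =>
    have hjM : p.totalDegree + j * e ≤ M := le_trans (by gcongr; omega) hM
    have hdeg_j : ((f^[j] p).totalDegree : ℤ) ≤ M := by
      exact_mod_cast (totalDegree_iterate_le hdeg p j).trans hjM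
    rw [Function.iterate_succ_apply', pow_succ', mul_assoc]
    calc l1norm (f (f^[j] p))
        ≤ C * (f^[j] p).totalDegree * l1norm (f^[j] p) := hnorm _
      _ ≤ C * M * ((C * M) ^ j * l1norm p) := by
        gcongr
        · exact l1norm_nonneg _
        · exact ih hjM

theorem l1norm_units_smul (u : ℤˣ) (p : MvPolynomial σ ℤ) : l1norm (u • p) = l1norm p := by
  rcases Int.units_eq_one_or u with rfl | rfl <;> simp

theorem l1norm_det_le {n : Type*} [Fintype n] [DecidableEq n] (M : Matrix n n (MvPolynomial σ ℤ))
    {b : n → ℤ} (hM : ∀ i j, l1norm (M i j) ≤ b i) :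
    l1norm M.det ≤ (Fintype.card n).factorial * ∏ i, b i := by
  rw [Matrix.det_apply]
  calc l1norm (∑ τ : Equiv.Perm n, Equiv.Perm.sign τ • ∏ i, M (τ i) i)
      ≤ ∑ τ : Equiv.Perm n, ∏ i, b i := (l1norm_sum_le _ _).trans <| sum_le_sum fun τ _ => by
        rw [l1norm_units_smul, ← Equiv.prod_comp τ b]
        exact (l1norm_prod_le _ _).trans
          (prod_le_prod (fun _ _ => l1norm_nonneg _) fun i _ => hM _ _)
    _ = (Fintype.card n).factorial * ∏ i, b i := by
      rw [sum_const, card_univ, Fintype.card_perm, nsmul_eq_mul]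

end MvPolynomial

def EcsIdx.equivSigma (n : ℕ) : EcsIdx n ≃ Σ i : Fin (n + 1), Fin (n + 1 - i) where
  toFun m := ⟨m.val.1, ⟨m.val.2, by have := m.property; omega⟩⟩
  invFun x := ⟨(x.1, ⟨x.2, by omega⟩), by dsimp only; omega⟩
  left_inv _ := rfl
  right_inv _ := rfl

theorem EcsIdx.two_mul_card (n : ℕ) : 2 * Fintype.card (EcsIdx n) = (n + 1) * (n + 2) := by
  rw [Fintype.card_congr (EcsIdx.equivSigma n), Fintype.card_sigma]
  simp only [Fintype.card_fin]
  rw [Fin.sum_univ_eq_sum_range (fun i => n + 1 - i), ← sum_range_reflect]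
  have hreflect : ∑ i ∈ range (n + 1), (n + 1 - (n + 1 - 1 - i)) = ∑ i ∈ range (n + 1), (i + 1) :=
    sum_congr rfl fun i hi => by have := mem_range.mp hi; omega
  rw [hreflect, sum_add_distrib, sum_const, card_range, smul_eq_mul, mul_add, mul_comm 2,
    sum_range_id_mul_two]
  simp only [add_tsub_cancel_right]
  ring

theorem add_le_totalDegree_of_mem_support {R : Type*} [CommSemiring R]
    {p : MvPolynomial (Fin 2) R} {m : Fin 2 →₀ ℕ} (hm : m ∈ p.support) :
    m 0 + m 1 ≤ p.totalDegree := by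
  have : Finsupp.degree m ≤ p.totalDegree := le_totalDegree hm
  rwa [Finsupp.degree_eq_sum, Fin.sum_univ_two] at this

theorem card_support_le_card_ecsIdx {R : Type*} [CommSemiring R] {p : MvPolynomial (Fin 2) R}
    {d : ℕ} (hp : p.totalDegree ≤ d) : #p.support ≤ Fintype.card (EcsIdx d) := by
  rw [← Fintype.card_coe]
  refine Fintype.card_le_of_injective (fun m =>
    have := (add_le_totalDegree_of_mem_support m.property).trans hp
    ⟨(⟨m.val 0, by omega⟩, ⟨m.val 1, by omega⟩), this⟩) fun m m' h => ?_
  simp only [Subtype.mk.injEq, Prod.mk.injEq, Fin.mk.injEq] at h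
  exact Subtype.ext (Finsupp.ext fun i => by fin_cases i; exacts [h.1, h.2])

theorem totalDegree_monFam_le (N : ℕ) (i : EcsIdx N) : (monFam (R := ℤ) N i).totalDegree ≤ N := by
  refine (totalDegree_mul _ _).trans ?_
  rw [totalDegree_X_pow, totalDegree_X_pow]
  exact i.property

theorem l1norm_monFam (N : ℕ) (i : EcsIdx N) : l1norm (monFam (R := ℤ) N i) = 1 := by
  rw [monFam, X_pow_eq_monomial, X_pow_eq_monomial, monomial_mul, l1norm_monomial, one_mul,
    abs_one]

theorem l1norm_ecstatic_le {A B : MvPolynomial (Fin 2) ℤ} {d N l : ℕ} {C : ℤ}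
    (hl : Fintype.card (EcsIdx N) = l) (hC : 0 ≤ C) (hdA : A.totalDegree ≤ d)
    (hdB : B.totalDegree ≤ d) (hA : l1norm A ≤ C) (hB : l1norm B ≤ C) :
    l1norm (ecstatic A B N) ≤ l.factorial * (C * (l * (d - 1) + N : ℕ)) ^ (l * (l - 1) / 2) := by
  subst hl
  have hD : (fun h => A * pderiv 0 h + B * pderiv 1 h) = fun h => ∑ i, ![A, B] i * pderiv i h := by
    funext h; simp [Fin.sum_univ_two]
  have hdeg (i : Fin 2) : (![A, B] i).totalDegree ≤ d := by fin_cases i <;> assumption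
  have hnorm (i : Fin 2) : l1norm (![A, B] i) ≤ C := by fin_cases i <;> assumption
  set l := Fintype.card (EcsIdx N)
  set r : EcsIdx N → ℕ := fun j => Fintype.equivFin (EcsIdx N) j
  have hr : ∑ j, r j = l * (l - 1) / 2 := by
    rw [Equiv.sum_comp (Fintype.equivFin (EcsIdx N)) (fun k : Fin l => (k : ℕ)),
      Fin.sum_univ_eq_sum_range (fun k => k), sum_range_id]
  have entry (j i : EcsIdx N) :
      l1norm (ecsMatOf A B N (monFam N) j i) ≤ (C * (l * (d - 1) + N : ℕ)) ^ r j := by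
    have hrl : r j ≤ l := ((Fintype.equivFin (EcsIdx N)) j).isLt.le
    have hM : (monFam (R := ℤ) N i).totalDegree + r j * (d - 1) ≤ l * (d - 1) + N := by
      have := totalDegree_monFam_le N i
      have : r j * (d - 1) ≤ l * (d - 1) := Nat.mul_le_mul_right _ hrl
      omega
    simpa [ecsMatOf, hD, l1norm_monFam] using l1norm_iterate_le hC
      (totalDegree_sum_mul_pderiv_le hdeg) (l1norm_sum_mul_pderiv_le hC hnorm) _ hM
  calc l1norm (ecstatic A B N) ≤ l.factorial * ∏ j, (C * (l * (d - 1) + N : ℕ)) ^ r j :=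
        l1norm_det_le _ entry
    _ = _ := by rw [prod_pow_eq_pow_sum, hr]

theorem Nat.factorial_le_pow_mul_pred_div_two (l : ℕ) : l.factorial ≤ l ^ (l * (l - 1) / 2) := by
  rcases le_or_gt l 2 with hl | hl
  · interval_cases l <;> decide
  · refine l.factorial_le_pow.trans (Nat.pow_le_pow_right (by omega) ?_)
    rw [Nat.le_div_iff_mul_le two_pos]
    exact Nat.mul_le_mul_left l (by omega)

theorem triangular_le_two_mul_sq {d N l T : ℕ} (hd : 1 ≤ d) (hN : 1 ≤ N) (hdN : ¬(d = 1 ∧ N = 1))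
    (hl : 2 * l = (N + 1) * (N + 2)) (hT : 2 * T = (d + 1) * (d + 2)) :
    T ≤ 2 * (l * (d - 1) + N) ^ 2 := by
  obtain ⟨e, rfl⟩ : ∃ e, d = e + 1 := ⟨d - 1, by omega⟩
  rw [add_tsub_cancel_right]
  rcases Nat.eq_zero_or_pos e with rfl | he
  · have : 2 ≤ N := by omega
    nlinarith
  · have : 3 ≤ l := by nlinarith
    have hM : 3 * e + 1 ≤ l * e + N := by nlinarith
    nlinarith [Nat.mul_le_mul hM hM]

theorem factorial_mul_triangular_pow_le {d N l T : ℕ} (hd : 1 ≤ d) (hl : 2 * l = (N + 1) * (N + 2))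
    (hT : 2 * T = (d + 1) * (d + 2)) :
    l.factorial * T ^ (l * (l - 1) / 2) ≤ (2 * l * (l * (d - 1) + N) ^ 2) ^ (l * (l - 1) / 2) := by
  rcases Nat.eq_zero_or_pos N with rfl | hN
  · obtain rfl : l = 1 := by omega
    simp
  by_cases hdN : d = 1 ∧ N = 1
  · obtain ⟨rfl, rfl⟩ := hdN
    obtain ⟨rfl, rfl⟩ : l = 3 ∧ T = 3 := by omega
    decide
  rw [show 2 * l * (l * (d - 1) + N) ^ 2 = l * (2 * (l * (d - 1) + N) ^ 2) by ring, mul_pow]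
  exact Nat.mul_le_mul (Nat.factorial_le_pow_mul_pred_div_two l)
    (Nat.pow_le_pow_left (triangular_le_two_mul_sq hd hN hdN hl hT) _)

/-- For `D = A ∂_X + B ∂_Y` with `A, B ∈ ℤ[X,Y]`, `deg A, deg B ≤ d`,
`‖A‖_∞, ‖B‖_∞ ≤ H`, and `l = (N+1)(N+2)/2`, the height of `E_N(D)` satisfies
`‖E_N(D)‖_∞ ≤ (2 l H (l(d-1)+N)³)^{l(l-1)/2}` (heights expressed as coefficient bounds). -/
theorem ecstatic_height_bound
    (A B : MvPolynomial (Fin 2) ℤ) (d N : ℕ) (H : ℤ) (hd : 1 ≤ d)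
    (hdA : A.totalDegree ≤ d) (hdB : B.totalDegree ≤ d)
    (hA : ∀ m, |A.coeff m| ≤ H) (hB : ∀ m, |B.coeff m| ≤ H) :
    ∀ m, |(ecstatic A B N).coeff m|
      ≤ (2 * (((N + 1) * (N + 2) / 2 : ℕ) : ℤ) * H
          * ((((N + 1) * (N + 2) / 2 : ℕ) : ℤ) * ((d : ℤ) - 1) + (N : ℤ)) ^ 3)
        ^ ((((N + 1) * (N + 2) / 2) * ((N + 1) * (N + 2) / 2 - 1) / 2 : ℕ)) := by
  intro m
  have hH : 0 ≤ H := (abs_nonneg _).trans (hA 0)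
  set l := (N + 1) * (N + 2) / 2
  have hcard : Fintype.card (EcsIdx N) = l := by have := EcsIdx.two_mul_card N; omega
  set T := Fintype.card (EcsIdx d)
  have hAT : l1norm A ≤ T * H := (l1norm_le_card_support_mul hA).trans
    (mul_le_mul_of_nonneg_right (by exact_mod_cast card_support_le_card_ecsIdx hdA) hH)
  have hBT : l1norm B ≤ T * H := (l1norm_le_card_support_mul hB).trans
    (mul_le_mul_of_nonneg_right (by exact_mod_cast card_support_le_card_ecsIdx hdB) hH)
  have hecs := l1norm_ecstatic_le hcard (by positivity) hdA hdB hAT hBT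
  have hnum := factorial_mul_triangular_pow_le hd (hcard ▸ EcsIdx.two_mul_card N)
    (EcsIdx.two_mul_card d)
  set M := l * (d - 1) + N with hM
  set E := l * (l - 1) / 2
  calc |(ecstatic A B N).coeff m|
      ≤ l.factorial * (T * H * M) ^ E := (abs_coeff_le_l1norm _ m).trans hecs
    _ = (l.factorial * T ^ E : ℕ) * (H * M) ^ E := by
        rw [mul_assoc (T : ℤ), mul_pow]; push_cast; ring
    _ ≤ ((2 * l * M ^ 2) ^ E : ℕ) * (H * M) ^ E :=
        mul_le_mul_of_nonneg_right (by exact_mod_cast hnum) (by positivity)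
    _ = _ := by
        rw [Nat.cast_pow, ← mul_pow, hM]
        congr 1
        push_cast [Nat.cast_sub hd]
        ring
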